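/- arXiv:2603.17515 — 5 statements merged into one kernel-verified Lean document; each statement's English description precedes it below -/
import Mathlib

section
/- For a subgroup U of a direct product G × H of finite groups, one has [k₁(U), p₁(U)] ≤ k₁(U') ≤ (p₁(U))' ∩ k₁(U), where k₁(U) = {g ∈ G : (g,1) ∈ U} and k₁(U') = {g ∈ G : (g,1) ∈ U'}. -/
def p1 {G H : Type*} [Group G] [Group H] (U : Subgroup (G × H)) : Subgroup G :=
  U.map (MonoidHom.fst G H)

def k1 {G H : Type*} [Group G] [Group H] (U : Subgroup (G × H)) : Subgroup G :=
  U.comap (MonoidHom.inl G H)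

section

variable {G H : Type*} [Group G] [Group H]

lemma k1_le_p1 (U : Subgroup (G × H)) : k1 U ≤ p1 U :=
  fun g hg => ⟨(g, 1), hg, rfl⟩

lemma k1_mono {U V : Subgroup (G × H)} (hUV : U ≤ V) : k1 U ≤ k1 V :=
  Subgroup.comap_mono hUV

lemma p1_commutator (U V : Subgroup (G × H)) : p1 ⁅U, V⁆ = ⁅p1 U, p1 V⁆ :=
  Subgroup.map_commutator U V (MonoidHom.fst G H)

open scoped commutatorElement in
lemma Prod.commutatorElement_mk_one_left (g a : G) (h : H) :
    ⁅((g, 1) : G × H), (a, h)⁆ = (⁅g, a⁆, 1) := by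
  simp [commutatorElement_def]

open scoped commutatorElement in
lemma commutator_k1_p1_le_k1_commutator (U V : Subgroup (G × H)) :
    ⁅k1 U, p1 V⁆ ≤ k1 ⁅U, V⁆ := by
  rw [Subgroup.commutator_le]
  rintro g hg _ ⟨⟨a, h⟩, hv, rfl⟩
  show (⁅g, a⁆, (1 : H)) ∈ ⁅U, V⁆
  rw [← Prod.commutatorElement_mk_one_left]
  exact Subgroup.commutator_mem_commutator hg hv

end

theorem commutator_k1_p1_le_k1_commutator_le_inf_general {G H : Type*} [Group G] [Group H]
    (U : Subgroup (G × H)) :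
    ⁅k1 U, p1 U⁆ ≤ k1 ⁅U, U⁆ ∧ k1 ⁅U, U⁆ ≤ ⁅p1 U, p1 U⁆ ⊓ k1 U := by
  refine ⟨commutator_k1_p1_le_k1_commutator U U, le_inf ?_ (k1_mono U.commutator_le_self)⟩
  rw [← p1_commutator]
  exact k1_le_p1 _

theorem commutator_k1_p1_le_k1_commutator_le_inf {G H : Type*} [Group G] [Group H]
    [Finite G] [Finite H] (U : Subgroup (G × H)) :
    ⁅k1 U, p1 U⁆ ≤ k1 ⁅U, U⁆ ∧ k1 ⁅U, U⁆ ≤ ⁅p1 U, p1 U⁆ ⊓ k1 U :=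
  commutator_k1_p1_le_k1_commutator_le_inf_general U
end

section
/- Let G, H be finite groups, U ≤ G × H a subdirect product, and p a prime. If k₁(U') contains a Sylow p-subgroup of G' ∩ k₁(U) then k₂(U') contains a Sylow p-subgroup of H' ∩ k₂(U). -/
def p2 {G H : Type*} [Group G] [Group H] (U : Subgroup (G × H)) : Subgroup H :=
  U.map (MonoidHom.snd G H)

def k2 {G H : Type*} [Group G] [Group H] (U : Subgroup (G × H)) : Subgroup H :=
  U.comap (MonoidHom.inr G H)

theorem IsPGroup.le_of_not_dvd_index {K : Type*} [Group K] [Finite K] {p : ℕ} [Fact p.Prime]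
    {P N : Subgroup K} (hP : IsPGroup p P) [N.Normal] (hN : ¬ p ∣ N.index) : P ≤ N := by
  obtain ⟨k, hk⟩ := hP.exists_card_eq
  have hcop : (p ^ k).Coprime N.index :=
    ((Nat.Prime.coprime_iff_not_dvd Fact.out).mpr hN).pow_left k
  rw [← Subgroup.relIndex_eq_one]
  exact Nat.eq_one_of_dvd_coprimes hcop (hk ▸ N.relIndex_dvd_card P)
    (N.relIndex_dvd_index_of_normal P)

section Goursat

variable {G H : Type*} [Group G] [Group H]

theorem mem_k1 {V : Subgroup (G × H)} {g : G} : g ∈ k1 V ↔ (g, 1) ∈ V := Iff.rfl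

theorem mem_k2 {V : Subgroup (G × H)} {h : H} : h ∈ k2 V ↔ (1, h) ∈ V := Iff.rfl

theorem fst_mem_k1_iff_snd_mem_k2 {V : Subgroup (G × H)} {x : G × H} (hx : x ∈ V) :
    x.1 ∈ k1 V ↔ x.2 ∈ k2 V := by
  rw [mem_k1, mem_k2]
  constructor <;> intro h
  · simpa [Prod.mul_def] using V.mul_mem (V.inv_mem h) hx
  · simpa [Prod.mul_def] using V.mul_mem hx (V.inv_mem h)

theorem card_eq_card_p1_mul_card_k2 (V : Subgroup (G × H)) :
    Nat.card V = Nat.card (p1 V) * Nat.card (k2 V) := by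
  let f : V →* G := (MonoidHom.fst G H).comp V.subtype
  let e : f.ker ≃ k2 V :=
    { toFun := fun x => ⟨x.1.1.2, by rw [mem_k2, ← show x.1.1.1 = 1 from x.2]; exact x.1.2⟩
      invFun := fun y => ⟨⟨(1, y), y.2⟩, rfl⟩
      left_inv := fun x => Subtype.ext <| Subtype.ext <| Prod.ext x.2.symm rfl
      right_inv := fun _ => rfl }
  rw [← f.ker.card_mul_index, Subgroup.index_ker, Nat.card_congr e, MonoidHom.range_comp,
    Subgroup.range_subtype, mul_comm]
  rfl

theorem card_eq_card_p2_mul_card_k1 (V : Subgroup (G × H)) :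
    Nat.card V = Nat.card (p2 V) * Nat.card (k1 V) := by
  let f : V →* H := (MonoidHom.snd G H).comp V.subtype
  let e : f.ker ≃ k1 V :=
    { toFun := fun x => ⟨x.1.1.1, by rw [mem_k1, ← show x.1.1.2 = 1 from x.2]; exact x.1.2⟩
      invFun := fun y => ⟨⟨(y, 1), y.2⟩, rfl⟩
      left_inv := fun x => Subtype.ext <| Subtype.ext <| Prod.ext rfl x.2.symm
      right_inv := fun _ => rfl }
  rw [← f.ker.card_mul_index, Subgroup.index_ker, Nat.card_congr e, MonoidHom.range_comp,
    Subgroup.range_subtype, mul_comm]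
  rfl

theorem p1_inf_prod_top (V : Subgroup (G × H)) (A : Subgroup G) :
    p1 (V ⊓ A.prod ⊤) = p1 V ⊓ A := by
  ext g
  simp only [p1, Subgroup.mem_map, Subgroup.mem_inf, Subgroup.mem_prod, Subgroup.mem_top,
    and_true, MonoidHom.coe_fst]
  grind

theorem p2_inf_top_prod (V : Subgroup (G × H)) (B : Subgroup H) :
    p2 (V ⊓ (⊤ : Subgroup G).prod B) = p2 V ⊓ B := by
  ext h
  simp only [p2, Subgroup.mem_map, Subgroup.mem_inf, Subgroup.mem_prod, Subgroup.mem_top,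
    true_and, MonoidHom.coe_snd]
  grind

theorem k2_inf_prod_top (V : Subgroup (G × H)) (A : Subgroup G) :
    k2 (V ⊓ A.prod ⊤) = k2 V := by
  ext h
  simp [mem_k2, Subgroup.mem_prod, one_mem]

theorem k1_inf_top_prod (V : Subgroup (G × H)) (B : Subgroup H) :
    k1 (V ⊓ (⊤ : Subgroup G).prod B) = k1 V := by
  ext g
  simp [mem_k1, Subgroup.mem_prod, one_mem]

theorem inf_prod_top_k1_eq_inf_top_prod_k2 {U V : Subgroup (G × H)} (hVU : V ≤ U) :
    V ⊓ (k1 U).prod ⊤ = V ⊓ (⊤ : Subgroup G).prod (k2 U) := by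
  ext x
  simp only [Subgroup.mem_inf, Subgroup.mem_prod, Subgroup.mem_top, and_true, true_and]
  exact and_congr_right fun hx => fst_mem_k1_iff_snd_mem_k2 (hVU hx)

theorem k1_le_p1_inf_k1 {U V : Subgroup (G × H)} (hVU : V ≤ U) : k1 V ≤ p1 V ⊓ k1 U :=
  fun g hg => ⟨⟨(g, 1), hg, rfl⟩, hVU hg⟩

theorem k2_le_p2_inf_k2 {U V : Subgroup (G × H)} (hVU : V ≤ U) : k2 V ≤ p2 V ⊓ k2 U :=
  fun h hh => ⟨⟨(1, h), hh, rfl⟩, hVU hh⟩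

theorem card_p1_inf_k1_mul_card_k2 [Finite G] [Finite H] {U V : Subgroup (G × H)}
    (hVU : V ≤ U) :
    Nat.card (p1 V ⊓ k1 U : Subgroup G) * Nat.card (k2 V) =
      Nat.card (p2 V ⊓ k2 U : Subgroup H) * Nat.card (k1 V) := by
  rw [← p1_inf_prod_top, ← k2_inf_prod_top V (k1 U), ← card_eq_card_p1_mul_card_k2,
    inf_prod_top_k1_eq_inf_top_prod_k2 hVU, card_eq_card_p2_mul_card_k1, p2_inf_top_prod,
    k1_inf_top_prod]

theorem relIndex_k1_eq_relIndex_k2 [Finite G] [Finite H] {U V : Subgroup (G × H)}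
    (hVU : V ≤ U) :
    (k1 V).relIndex (p1 V ⊓ k1 U) = (k2 V).relIndex (p2 V ⊓ k2 U) := by
  have hcard₁ := Subgroup.relIndex_mul_relIndex ⊥ _ _ bot_le (k1_le_p1_inf_k1 hVU)
  have hcard₂ := Subgroup.relIndex_mul_relIndex ⊥ _ _ bot_le (k2_le_p2_inf_k2 hVU)
  simp only [Subgroup.relIndex_bot_left] at hcard₁ hcard₂
  have h := card_p1_inf_k1_mul_card_k2 hVU
  rw [← hcard₁, ← hcard₂] at h
  have hpos₁ : 0 < Nat.card (k1 V) := Nat.card_pos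
  have hpos₂ : 0 < Nat.card (k2 V) := Nat.card_pos
  apply Nat.eq_of_mul_eq_mul_left (Nat.mul_pos hpos₁ hpos₂)
  linarith

theorem normal_k2_of_p2_normalizer_eq_top {N : Subgroup (G × H)}
    (hN : p2 (Subgroup.normalizer (N : Set (G × H))) = ⊤) : (k2 N).Normal := by
  refine ⟨fun n hn h => ?_⟩
  obtain ⟨u, hu, rfl⟩ := (Subgroup.eq_top_iff' _).mp hN h
  rw [mem_k2]
  simpa [Prod.mul_def] using (hu (1, n)).mp hn

theorem p1_commutator_of_p1_eq_top {U : Subgroup (G × H)} (h1 : p1 U = ⊤) :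
    p1 ⁅U, U⁆ = commutator G := by
  rw [p1, Subgroup.map_commutator, ← p1, h1, commutator_def]

theorem p2_commutator_of_p2_eq_top {U : Subgroup (G × H)} (h2 : p2 U = ⊤) :
    p2 ⁅U, U⁆ = commutator H := by
  rw [p2, Subgroup.map_commutator, ← p2, h2, commutator_def]

end Goursat

theorem sylow_containment_symm {G H : Type*} [Group G] [Group H]
    [Finite G] [Finite H] (U : Subgroup (G × H))
    (h1 : p1 U = ⊤) (h2 : p2 U = ⊤) (p : ℕ) [Fact p.Prime]
    (hG : ∃ P : Sylow p ↥(commutator G ⊓ k1 U),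
      (P : Subgroup ↥(commutator G ⊓ k1 U)).map (commutator G ⊓ k1 U).subtype ≤ k1 ⁅U, U⁆) :
    ∃ Q : Sylow p ↥(commutator H ⊓ k2 U),
      (Q : Subgroup ↥(commutator H ⊓ k2 U)).map (commutator H ⊓ k2 U).subtype ≤ k2 ⁅U, U⁆ := by
  obtain ⟨P, hP⟩ := hG
  have hindex : ¬ p ∣ (k2 ⁅U, U⁆).relIndex (commutator H ⊓ k2 U) := by
    rw [← p2_commutator_of_p2_eq_top h2,
      ← relIndex_k1_eq_relIndex_k2 ((Subgroup.commutator_le_sup U U).trans_eq (sup_idem U)),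
      p1_commutator_of_p1_eq_top h1]
    exact fun hdvd => P.not_dvd_index
      (hdvd.trans (Subgroup.index_dvd_of_le (Subgroup.map_le_iff_le_comap.mp hP)))
  have : (k2 ⁅U, U⁆).Normal := normal_k2_of_p2_normalizer_eq_top <|
    eq_top_mono (Subgroup.map_mono (Subgroup.normalizer_commutator_ge_left U U)) h2
  obtain ⟨Q⟩ : Nonempty (Sylow p ↥(commutator H ⊓ k2 U)) := inferInstance
  exact ⟨Q, Subgroup.map_le_iff_le_comap.mpr (Q.isPGroup'.le_of_not_dvd_index hindex)⟩
end

section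
/- Let G be a finite group, φ ∈ Aut(G), and Δ(G,φ) ≤ U ≤ G × G. Suppose that for some i ∈ {1,2}: (i) k_i(U) ∩ G' is nontrivial, and (ii) k_i(U) ≤ Z(G). Then k_i(U') ≠ G' ∩ k_i(U); in particular U is not extensible. -/
def twistedDiag {G : Type*} [Group G] (φ : G ≃* G) : Subgroup (G × G) :=
  ((MonoidHom.id G).prod φ.toMonoidHom).range

/-!
Since `U` contains `Δ(G,φ)`, every element of `U` is an element of `Δ(G,φ)` times an element of
`k₁(U) × 1` (or of `1 × k₂(U)`). When that kernel is central, the correction factor is central in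
`G × G`, so commutators of `U` are commutators of `Δ(G,φ)`; hence `U' ≤ Δ(G,φ)` and `k_i(U') = 1`,
whereas `G' ∩ k_i(U) ≠ 1`.
-/

open Subgroup
open scoped commutatorElement

section CentralFactor

variable {P : Type*} [Group P] {z : P}

lemma commutatorElement_mul_left_of_mem_center (hz : z ∈ center P) (a b : P) :
    ⁅a * z, b⁆ = ⁅a, b⁆ := by
  simp only [commutatorElement_def, mul_inv_rev, mul_assoc a z, ← mem_center_iff.mp hz b]
  group

lemma commutatorElement_mul_right_of_mem_center (hz : z ∈ center P) (a b : P) :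
    ⁅a, b * z⁆ = ⁅a, b⁆ := by
  rw [← commutatorElement_inv, commutatorElement_mul_left_of_mem_center hz,
    commutatorElement_inv]

lemma Subgroup.commutator_le_of_le_sup_center {U V : Subgroup P} (h : U ≤ V ⊔ center P) :
    ⁅U, U⁆ ≤ ⁅V, V⁆ := by
  rw [commutator_le]
  intro u hu w hw
  obtain ⟨v, hv, c, hc, rfl⟩ := mem_sup_of_normal_right.mp (h hu)
  obtain ⟨v', hv', c', hc', rfl⟩ := mem_sup_of_normal_right.mp (h hw)
  rw [commutatorElement_mul_left_of_mem_center hc, commutatorElement_mul_right_of_mem_center hc']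
  exact commutator_mem_commutator hv hv'

end CentralFactor

section Kernels

variable {G : Type*} [Group G] {φ : G ≃* G} {U : Subgroup (G × G)}

lemma mem_twistedDiag {x y : G} : (x, y) ∈ twistedDiag φ ↔ φ x = y := by
  simp [twistedDiag, MonoidHom.mem_range, Prod.ext_iff]

lemma k1_twistedDiag : k1 (twistedDiag φ) = ⊥ := by
  ext x
  simp [k1, mem_twistedDiag]

lemma k2_twistedDiag : k2 (twistedDiag φ) = ⊥ := by
  ext y
  simp [k2, mem_twistedDiag, eq_comm]

lemma le_twistedDiag_sup_center_of_k1_le_center (hU : twistedDiag φ ≤ U)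
    (hc : k1 U ≤ center G) : U ≤ twistedDiag φ ⊔ center (G × G) := by
  rintro ⟨a, b⟩ hab
  have hdiag : (φ.symm b, b) ∈ twistedDiag φ := mem_twistedDiag.mpr (by simp)
  have hker : ((φ.symm b)⁻¹ * a, (1 : G)) ∈ U := by
    simpa using mul_mem (inv_mem (hU hdiag)) hab
  refine mem_sup_of_normal_right.mpr ⟨_, hdiag, ((φ.symm b)⁻¹ * a, 1), ?_, ?_⟩
  · rw [Subgroup.center_prod]
    exact ⟨hc hker, one_mem _⟩
  · simp

lemma le_twistedDiag_sup_center_of_k2_le_center (hU : twistedDiag φ ≤ U)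
    (hc : k2 U ≤ center G) : U ≤ twistedDiag φ ⊔ center (G × G) := by
  rintro ⟨a, b⟩ hab
  have hdiag : (a, φ a) ∈ twistedDiag φ := mem_twistedDiag.mpr rfl
  have hker : ((1 : G), (φ a)⁻¹ * b) ∈ U := by
    simpa using mul_mem (inv_mem (hU hdiag)) hab
  refine mem_sup_of_normal_right.mpr ⟨_, hdiag, (1, (φ a)⁻¹ * b), ?_, ?_⟩
  · rw [Subgroup.center_prod]
    exact ⟨one_mem _, hc hker⟩
  · simp

lemma commutator_le_twistedDiag_of_le_sup_center (h : U ≤ twistedDiag φ ⊔ center (G × G)) :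
    ⁅U, U⁆ ≤ twistedDiag φ :=
  (commutator_le_of_le_sup_center h).trans (commutator_le_self _)

lemma k1_commutator_eq_bot_of_k1_le_center (hU : twistedDiag φ ≤ U) (hc : k1 U ≤ center G) :
    k1 ⁅U, U⁆ = ⊥ :=
  eq_bot_iff.mpr <| (comap_mono <| commutator_le_twistedDiag_of_le_sup_center <|
    le_twistedDiag_sup_center_of_k1_le_center hU hc).trans k1_twistedDiag.le

lemma k2_commutator_eq_bot_of_k2_le_center (hU : twistedDiag φ ≤ U) (hc : k2 U ≤ center G) :
    k2 ⁅U, U⁆ = ⊥ :=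
  eq_bot_iff.mpr <| (comap_mono <| commutator_le_twistedDiag_of_le_sup_center <|
    le_twistedDiag_sup_center_of_k2_le_center hU hc).trans k2_twistedDiag.le

end Kernels

theorem inextensible_of_central_kernel_general {G : Type*} [Group G] (φ : G ≃* G)
    (U : Subgroup (G × G)) (hU : twistedDiag φ ≤ U) :
    ((k1 U ⊓ commutator G ≠ ⊥ ∧ k1 U ≤ Subgroup.center G) →
        k1 ⁅U, U⁆ ≠ commutator G ⊓ k1 U) ∧
      ((k2 U ⊓ commutator G ≠ ⊥ ∧ k2 U ≤ Subgroup.center G) →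
        k2 ⁅U, U⁆ ≠ commutator G ⊓ k2 U) := by
  refine ⟨fun ⟨hne, hc⟩ => ?_, fun ⟨hne, hc⟩ => ?_⟩
  · rw [k1_commutator_eq_bot_of_k1_le_center hU hc, inf_comm]
    exact hne.symm
  · rw [k2_commutator_eq_bot_of_k2_le_center hU hc, inf_comm]
    exact hne.symm

theorem inextensible_of_central_kernel {G : Type*} [Group G] [Finite G] (φ : G ≃* G)
    (U : Subgroup (G × G)) (hU : twistedDiag φ ≤ U) :
    ((k1 U ⊓ commutator G ≠ ⊥ ∧ k1 U ≤ Subgroup.center G) →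
        k1 ⁅U, U⁆ ≠ commutator G ⊓ k1 U) ∧
      ((k2 U ⊓ commutator G ≠ ⊥ ∧ k2 U ≤ Subgroup.center G) →
        k2 ⁅U, U⁆ ≠ commutator G ⊓ k2 U) :=
  inextensible_of_central_kernel_general φ U hU
end

section
/- Let G be a finite group, φ, ψ ∈ Aut(G), Δ(G,φ) ≤ U ≤ G × G and Δ(G,ψ) ≤ V ≤ G × G. Then k₁(U ∗ V) = k₁(U) · φ⁻¹(k₁(V)), where U ∗ V = {(u,v) ∈ G × G : ∃ x ∈ G, (u,x) ∈ U and (x,v) ∈ V}. -/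
open Pointwise

/-- The ∗-product of subgroups `U ≤ F × G` and `V ≤ G × H`. -/
def starProd {F G H : Type*} [Group F] [Group G] [Group H]
    (U : Subgroup (F × G)) (V : Subgroup (G × H)) : Subgroup (F × H) where
  carrier := {x | ∃ g : G, (x.1, g) ∈ U ∧ (g, x.2) ∈ V}
  one_mem' := ⟨1, U.one_mem, V.one_mem⟩
  mul_mem' := by
    rintro a b ⟨x, hx1, hx2⟩ ⟨y, hy1, hy2⟩
    exact ⟨x * y, U.mul_mem hx1 hy1, V.mul_mem hx2 hy2⟩
  inv_mem' := by
    rintro a ⟨x, h1, h2⟩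
    exact ⟨x⁻¹, U.inv_mem h1, V.inv_mem h2⟩

lemma mem_k1_starProd_iff {F G H : Type*} [Group F] [Group G] [Group H]
    {U : Subgroup (F × G)} {V : Subgroup (G × H)} {f : F} :
    f ∈ k1 (starProd U V) ↔ ∃ g ∈ k1 V, (f, g) ∈ U :=
  exists_congr fun _ => and_comm

lemma mem_iff_mul_inv_mem_k1 {G H : Type*} [Group G] [Group H] {U : Subgroup (G × H)}
    {a g : G} {h : H} (ha : (a, h) ∈ U) : (g, h) ∈ U ↔ g * a⁻¹ ∈ k1 U := by
  have hquot : ((g * a⁻¹, 1) : G × H) = (g, h) * (a, h)⁻¹ := by simp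
  rw [k1, Subgroup.mem_comap, MonoidHom.inl_apply, hquot, U.mul_mem_cancel_right (U.inv_mem ha)]

lemma symm_apply_mem_of_twistedDiag_le {G : Type*} [Group G] {φ : G ≃* G}
    {U : Subgroup (G × G)} (hU : twistedDiag φ ≤ U) (x : G) : (φ.symm x, x) ∈ U :=
  hU ⟨φ.symm x, by simp⟩

theorem k1_starProd_general {G : Type*} [Group G] (φ : G ≃* G)
    (U V : Subgroup (G × G)) (hU : twistedDiag φ ≤ U) :
    (k1 (starProd U V) : Set G) =
      (k1 U : Set G) * ((k1 V).map φ.symm.toMonoidHom : Set G) := by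
  ext g
  simp only [SetLike.mem_coe, Set.mem_mul, Subgroup.mem_map, mem_k1_starProd_iff,
    mem_iff_mul_inv_mem_k1 (symm_apply_mem_of_twistedDiag_le hU _)]
  constructor
  · rintro ⟨x, hx, hgx⟩
    exact ⟨_, hgx, φ.symm x, ⟨x, hx, rfl⟩, inv_mul_cancel_right g _⟩
  · rintro ⟨a, ha, _, ⟨x, hx, rfl⟩, rfl⟩
    exact ⟨x, hx, by simpa using ha⟩

theorem k1_starProd {G : Type*} [Group G] [Finite G] (φ ψ : G ≃* G)
    (U V : Subgroup (G × G)) (hU : twistedDiag φ ≤ U) (hV : twistedDiag ψ ≤ V) :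
    (k1 (starProd U V) : Set G) =
      (k1 U : Set G) * ((k1 V).map φ.symm.toMonoidHom : Set G) :=
  k1_starProd_general φ U V hU
end

section
/- Let G be a finite group, φ, ψ ∈ Aut(G), Δ(G,φ) ≤ U ≤ G × G and Δ(G,ψ) ≤ V ≤ G × G. Then k₂(U ∗ V) = k₂(V) · ψ(k₂(U)). -/
open Pointwise

section StarProd

variable {F G H : Type*} [Group F] [Group G] [Group H]

theorem mem_k2_starProd {U : Subgroup (F × G)} {V : Subgroup (G × H)} {h : H} :
    h ∈ k2 (starProd U V) ↔ ∃ g ∈ k2 U, (g, h) ∈ V :=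
  Iff.rfl

theorem mem_iff_mul_inv_mem_k2_of_graph_le {V : Subgroup (G × H)} {ψ : G →* H}
    (hV : ∀ g, (g, ψ g) ∈ V) {g : G} {h : H} :
    (g, h) ∈ V ↔ h * (ψ g)⁻¹ ∈ k2 V := by
  have hquot : ((1 : G), h * (ψ g)⁻¹) = (g, h) * (g, ψ g)⁻¹ := by simp
  rw [k2, Subgroup.mem_comap, MonoidHom.inr_apply, hquot,
    Subgroup.mul_mem_cancel_right V (V.inv_mem (hV g))]

theorem coe_k2_starProd_of_graph_le (U : Subgroup (F × G)) {V : Subgroup (G × H)} {ψ : G →* H}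
    (hV : ∀ g, (g, ψ g) ∈ V) :
    (k2 (starProd U V) : Set H) = (k2 V : Set H) * ((k2 U).map ψ : Set H) := by
  ext h
  simp only [SetLike.mem_coe, mem_k2_starProd, mem_iff_mul_inv_mem_k2_of_graph_le hV, Set.mem_mul,
    Subgroup.mem_map]
  constructor
  · rintro ⟨g, hg, hgh⟩
    exact ⟨_, hgh, ψ g, ⟨g, hg, rfl⟩, inv_mul_cancel_right h (ψ g)⟩
  · rintro ⟨v, hv, _, ⟨g, hg, rfl⟩, rfl⟩
    exact ⟨g, hg, by simpa using hv⟩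

end StarProd

theorem k2_starProd_general {G : Type*} [Group G] (ψ : G ≃* G)
    (U V : Subgroup (G × G)) (hV : twistedDiag ψ ≤ V) :
    (k2 (starProd U V) : Set G) =
      (k2 V : Set G) * ((k2 U).map ψ.toMonoidHom : Set G) :=
  coe_k2_starProd_of_graph_le U fun g => hV ⟨g, rfl⟩

theorem k2_starProd {G : Type*} [Group G] [Finite G] (φ ψ : G ≃* G)
    (U V : Subgroup (G × G)) (hU : twistedDiag φ ≤ U) (hV : twistedDiag ψ ≤ V) :
    (k2 (starProd U V) : Set G) =
      (k2 V : Set G) * ((k2 U).map ψ.toMonoidHom : Set G) :=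
  k2_starProd_general ψ U V hV
end
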